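/- Let x be a bi-infinite word over a finite alphabet A that is eventually neutral with threshold N and let σ : A* → B* be a non-erasing morphism. Then there exists C ∈ ℤ such that c_x(n) = C + p_x(n) for all n ≥ max{1, N·‖σ‖}. In particular, if x is neutral (threshold 0), then c_x(n) = ∑_{a ∈ A} |σ(a)| + (Card A − 1)(n − 1) for all n ≥ 1. -/

import Mathlib

open List

variable {A : Type*} {B : Type*} {C : Type*}

/-- `w` is a factor of the bi-infinite word `x`. -/
def IsFactor (x : ℤ → A) (w : List A) : Prop :=
  ∃ i : ℤ, ∀ j : Fin w.length, x (i + (j : ℕ)) = w.get j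

/-- Left extensions `E⁻_x(w)`. -/
def extL (x : ℤ → A) (w : List A) : Set A := {a | IsFactor x (a :: w)}

/-- Right extensions `E⁺_x(w)`. -/
def extR (x : ℤ → A) (w : List A) : Set A := {b | IsFactor x (w ++ [b])}

/-- Bi-extensions `E_x(w)`. -/
def extB (x : ℤ → A) (w : List A) : Set (A × A) :=
  {p | IsFactor x (p.1 :: (w ++ [p.2]))}

/-- The multiplicity `m_x(w)`. -/
noncomputable def mult (x : ℤ → A) (w : List A) : ℤ :=
  ((extB x w).ncard : ℤ) - (extL x w).ncard - (extR x w).ncard + 1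

/-- The extension graph `𝓔_x(w)`: bipartite graph on the disjoint union of
`E⁻_x(w)` and `E⁺_x(w)`, with an edge between left vertex `a` and right vertex `b`
iff `(a, b) ∈ E_x(w)`. -/
def extGraph (x : ℤ → A) (w : List A) :
    SimpleGraph ({a : A // a ∈ extL x w} ⊕ {b : A // b ∈ extR x w}) :=
  SimpleGraph.fromRel fun u v =>
    ∃ (a : {a : A // a ∈ extL x w}) (b : {b : A // b ∈ extR x w}),
      u = Sum.inl a ∧ v = Sum.inr b ∧ (a.1, b.1) ∈ extB x w

/-- The factor complexity `p_x(n)`. -/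
noncomputable def cplx (x : ℤ → A) (n : ℕ) : ℕ :=
  Set.ncard {w : List A | IsFactor x w ∧ w.length = n}

/-- Application of a morphism (given by its values on letters) to a finite word. -/
def appw (σ : A → List B) (w : List A) : List B := (w.map σ).flatten

/-- `y` is the image of the bi-infinite word `x` under the (non-erasing) morphism `σ`,
i.e. `y = ⋯σ(x_{-1})σ(x_0)σ(x_1)⋯`, anchored so that `σ(x_0)` starts at position `0`. -/
def IsImage (σ : A → List B) (x : ℤ → A) (y : ℤ → B) : Prop :=
  ∃ t : ℤ → ℤ, t 0 = 0 ∧ (∀ n : ℤ, t (n + 1) = t n + (σ (x n)).length) ∧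
    ∀ (n : ℤ) (j : Fin (σ (x n)).length), y (t n + (j : ℕ)) = (σ (x n)).get j

/-- The width `‖σ‖` of a morphism. -/
noncomputable def width [Fintype A] (σ : A → List B) : ℕ :=
  Finset.univ.sup fun a => (σ a).length

/-- `(w, k)` is a covering of the nonempty word `u`:
`u = σ(w)_{[k+1, k+|u|]}`, `k + 1 ≤ |σ(w₁)|` and `k + |u| > |σ(w₁⋯w_{|w|-1})|`. -/
def IsCovering (σ : A → List B) (u : List B) (w : List A) (k : ℕ) : Prop :=
  w ≠ [] ∧ u ≠ [] ∧ u = ((appw σ w).drop k).take u.length ∧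
    k + 1 ≤ (w.head?.elim 0 fun a => (σ a).length) ∧ (appw σ w.dropLast).length < k + u.length

/-- `c_x(n)`: the number of coverings `(w, k)` of words of length `n` with `w ∈ L(x)`. -/
noncomputable def ccount (σ : A → List B) (x : ℤ → A) (n : ℕ) : ℕ :=
  Set.ncard {p : List A × ℕ |
    IsFactor x p.1 ∧ ∃ u : List B, u.length = n ∧ IsCovering σ u p.1 p.2}

/-- `x` is eventually `P` with threshold `N`: `N` is the minimal integer such that
every factor of `x` of length at least `N` satisfies `P`. -/
def EvThreshold (x : ℤ → A) (P : List A → Prop) (N : ℕ) : Prop :=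
  (∀ w, IsFactor x w → N ≤ w.length → P w) ∧
    ∀ M : ℕ, (∀ w, IsFactor x w → M ≤ w.length → P w) → N ≤ M

namespace StmtAux

def win (x : ℤ → A) (i : ℤ) (n : ℕ) : List A := (List.range n).map fun j : ℕ => x (i + (j : ℤ))

@[simp] lemma win_length (x : ℤ → A) (i : ℤ) (n : ℕ) : (win x i n).length = n := by
  simp only [win, List.length_map, List.length_range]

@[simp] lemma win_getElem (x : ℤ → A) (i : ℤ) (n : ℕ) (j : ℕ) (hj : j < (win x i n).length) :
    (win x i n)[j] = x (i + j) := by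
  have hj' : j < n := by simpa using hj
  simp only [win, List.getElem_map, List.getElem_range]

lemma isFactor_iff_win (x : ℤ → A) (w : List A) :
    IsFactor x w ↔ ∃ i, w = win x i w.length := by
  constructor
  · rintro ⟨i, h⟩
    refine ⟨i, List.ext_getElem (by simp) ?_⟩
    intro j hj hj'
    have := h ⟨j, hj⟩
    simp [List.get_eq_getElem] at this
    simp [this]
  · rintro ⟨i, h⟩
    refine ⟨i, ?_⟩
    intro j
    have hj : (j : ℕ) < w.length := j.2
    have := List.getElem_of_eq h hj
    simp only [List.get_eq_getElem]
    rw [this]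
    simp
  
lemma isFactor_win (x : ℤ → A) (i : ℤ) (n : ℕ) : IsFactor x (win x i n) := by
  rw [isFactor_iff_win]; exact ⟨i, by simp⟩

lemma win_take (x : ℤ → A) (i : ℤ) (n m : ℕ) : (win x i n).take m = win x i (min m n) := by
  apply List.ext_getElem (by simp) ?_
  intro j hj hj'
  simp at hj hj' ⊢

lemma win_drop (x : ℤ → A) (i : ℤ) (n m : ℕ) : (win x i n).drop m = win x (i + m) (n - m) := by
  apply List.ext_getElem (by simp) ?_
  intro j hj hj'
  simp at hj hj' ⊢
  congr 1
  ring

lemma isFactor_of_infix {x : ℤ → A} {v w : List A} (hvw : v <:+: w) (hw : IsFactor x w) :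
    IsFactor x v := by
  rw [isFactor_iff_win] at hw ⊢
  obtain ⟨i, hw⟩ := hw
  obtain ⟨s, t, hst⟩ := hvw
  refine ⟨i + s.length, ?_⟩
  have hlen : s.length + v.length ≤ w.length := by
    rw [← hst]; simp
  have h1 : v = (w.drop s.length).take v.length := by
    rw [← hst]
    rw [List.drop_append_of_le_length (by simp)]
    simp
  have hmin : min v.length (w.length - s.length) = v.length := by omega
  rw [h1, hw, win_drop, win_take, hmin]
  simp

lemma isFactor_nil (x : ℤ → A) : IsFactor x [] := ⟨0, fun j => absurd j.2 (by simp)⟩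

lemma isFactor_tail {x : ℤ → A} {w : List A} (h : IsFactor x w) : IsFactor x w.tail :=
  isFactor_of_infix (List.IsSuffix.isInfix (List.tail_suffix w)) h

lemma isFactor_dropLast {x : ℤ → A} {w : List A} (h : IsFactor x w) : IsFactor x w.dropLast :=
  isFactor_of_infix (List.IsPrefix.isInfix (List.dropLast_prefix w)) h

lemma isFactor_of_cons {x : ℤ → A} {a : A} {w : List A} (h : IsFactor x (a :: w)) :
    IsFactor x w := by
  simpa using isFactor_tail h

lemma isFactor_of_concat {x : ℤ → A} {b : A} {w : List A} (h : IsFactor x (w ++ [b])) :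
    IsFactor x w :=
  isFactor_of_infix (List.IsPrefix.isInfix ⟨[b], rfl⟩) h

lemma exists_extR {x : ℤ → A} {w : List A} (h : IsFactor x w) :
    ∃ b, IsFactor x (w ++ [b]) := by
  rw [isFactor_iff_win] at h
  obtain ⟨i, hw⟩ := h
  refine ⟨x (i + w.length), ?_⟩
  have : w ++ [x (i + w.length)] = win x i (w.length + 1) := by
    rw [win, List.range_succ, List.map_append, ← win]
    rw [← hw]
    simp
  rw [this]
  exact isFactor_win x i _

variable [Fintype A]

noncomputable def fextL (x : ℤ → A) (w : List A) : Finset A :=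
  (Set.toFinite {a | IsFactor x (a :: w)}).toFinset

noncomputable def fextR (x : ℤ → A) (w : List A) : Finset A :=
  (Set.toFinite {b | IsFactor x (w ++ [b])}).toFinset

noncomputable def fextB (x : ℤ → A) (w : List A) : Finset (A × A) :=
  (Set.toFinite {p : A × A | IsFactor x (p.1 :: (w ++ [p.2]))}).toFinset

@[simp] lemma mem_fextL {x : ℤ → A} {w : List A} {a : A} :
    a ∈ fextL x w ↔ IsFactor x (a :: w) := by simp [fextL]

@[simp] lemma mem_fextR {x : ℤ → A} {w : List A} {b : A} :
    b ∈ fextR x w ↔ IsFactor x (w ++ [b]) := by simp [fextR]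

@[simp] lemma mem_fextB {x : ℤ → A} {w : List A} {p : A × A} :
    p ∈ fextB x w ↔ IsFactor x (p.1 :: (w ++ [p.2])) := by simp [fextB]

lemma fextB_card (x : ℤ → A) (w : List A) :
    (fextB x w).card = ∑ a ∈ fextL x w, (fextR x (a :: w)).card := by
  classical
  rw [Finset.card_eq_sum_card_fiberwise (f := Prod.fst) (t := fextL x w) ?_]
  · refine Finset.sum_congr rfl ?_
    intro a _
    rw [show ((fextB x w).filter fun p => p.1 = a) = (fextR x (a :: w)).image (fun b => (a, b)) by
      ext p
      simp only [Finset.mem_filter, mem_fextB, Finset.mem_image, mem_fextR]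
      constructor
      · rintro ⟨h1, rfl⟩
        exact ⟨p.2, by simpa [List.cons_append] using h1, rfl⟩
      · rintro ⟨b, hb, rfl⟩
        exact ⟨by simpa [List.cons_append] using hb, rfl⟩]
    rw [Finset.card_image_of_injective _ (fun b b' h => by simpa using h)]
  · intro p hp
    simp only [Finset.mem_coe, mem_fextB] at hp
    simp only [Finset.mem_coe, mem_fextL]
    exact isFactor_of_concat (w := p.1 :: w) (by simpa [List.cons_append] using hp)

lemma mult'_eq (x : ℤ → A) (w : List A) :
    mult x w = ((fextB x w).card : ℤ) - (fextL x w).card - (fextR x w).card + 1 := by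
  rw [mult, Set.ncard_eq_toFinset_card _ (Set.toFinite _),
    Set.ncard_eq_toFinset_card _ (Set.toFinite _), Set.ncard_eq_toFinset_card _ (Set.toFinite _)]
  rfl

/-- σ-length of a word -/
def wl (σ : A → List B) (w : List A) : ℕ := (appw σ w).length

@[simp] lemma wl_nil (σ : A → List B) : wl σ [] = 0 := rfl

@[simp] lemma wl_cons (σ : A → List B) (a : A) (w : List A) :
    wl σ (a :: w) = (σ a).length + wl σ w := by simp [wl, appw]

@[simp] lemma wl_append (σ : A → List B) (v w : List A) :
    wl σ (v ++ w) = wl σ v + wl σ w := by simp [wl, appw]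

lemma wl_head_tail (σ : A → List B) {w : List A} (h : w ≠ []) :
    wl σ w = (σ (w.head h)).length + wl σ w.tail := by
  cases w with
  | nil => exact absurd rfl h
  | cons a w => simp

lemma wl_dropLast (σ : A → List B) {w : List A} (h : w ≠ []) :
    wl σ w = wl σ w.dropLast + (σ (w.getLast h)).length := by
  conv_lhs => rw [← List.dropLast_append_getLast h]
  simp

lemma length_le_wl (σ : A → List B) (hne : ∀ a, σ a ≠ []) (w : List A) :
    w.length ≤ wl σ w := by
  induction w with
  | nil => simp
  | cons a w ih =>
    have := List.length_pos_iff.mpr (hne a)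
    simp only [wl_cons, List.length_cons]
    omega

lemma wl_le (σ : A → List B) (K : ℕ) (hK : ∀ a, (σ a).length ≤ K) (w : List A) :
    wl σ w ≤ w.length * K := by
  induction w with
  | nil => simp
  | cons a w ih =>
    simp only [wl_cons, List.length_cons]
    have := hK a
    calc (σ a).length + wl σ w ≤ K + w.length * K := by omega
    _ = (w.length + 1) * K := by ring

/-- The interpolating cut sets. -/
def Dset (x : ℤ → A) (σ : A → List B) (n j : ℕ) : Set (List A) :=
  {v | IsFactor x v ∧ n ≤ wl σ v ∧ j ≤ v.length ∧ (wl σ v.tail < n ∨ v.length = j)}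

lemma Dset_finite (x : ℤ → A) (σ : A → List B) (hne : ∀ a, σ a ≠ []) (n j : ℕ) :
    (Dset x σ n j).Finite := by
  apply Set.Finite.subset (List.finite_length_le A (max j n))
  rintro v ⟨-, -, -, hd⟩
  simp only [Set.mem_setOf_eq]
  rcases hd with hd | hd
  · have h1 : v.tail.length ≤ wl σ v.tail := length_le_wl σ hne v.tail
    have h2 : v.tail.length = v.length - 1 := by simp
    omega
  · omega

noncomputable def Dfin (x : ℤ → A) (σ : A → List B) (hne : ∀ a, σ a ≠ []) (n j : ℕ) :
    Finset (List A) := (Dset_finite x σ hne n j).toFinset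

lemma mem_Dfin {x : ℤ → A} {σ : A → List B} {hne : ∀ a, σ a ≠ []} {n j : ℕ} {v : List A} :
    v ∈ Dfin x σ hne n j ↔
      IsFactor x v ∧ n ≤ wl σ v ∧ j ≤ v.length ∧ (wl σ v.tail < n ∨ v.length = j) := by
  simp [Dfin, Dset]

/-- `H`-sum of a finite set of words: `∑ (e⁺(v) - 1)`. -/
noncomputable def Hsum (x : ℤ → A) (U : Finset (List A)) : ℤ :=
  ∑ v ∈ U, (((fextR x v).card : ℤ) - 1)

lemma Hsum_step (x : ℤ → A) (σ : A → List B) (hne : ∀ a, σ a ≠ []) (n j : ℕ) :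
    Hsum x (Dfin x σ hne n (j+1)) = Hsum x (Dfin x σ hne n j)
      + ∑ v ∈ (Dfin x σ hne n j).filter (fun v => v.length = j), mult x v := by
  classical
  set T := Dfin x σ hne n j with hT
  set T1 := T.filter (fun v => ¬ v.length = j) with hT1
  set T2 := T.filter (fun v => v.length = j) with hT2
  set B2 := T2.biUnion (fun v => (fextL x v).image (fun a => a :: v)) with hB2
  have hmemT2 : ∀ v ∈ T2, IsFactor x v ∧ n ≤ wl σ v ∧ v.length = j := by
    intro v hv
    rw [hT2, Finset.mem_filter, hT, mem_Dfin] at hv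
    exact ⟨hv.1.1, hv.1.2.1, hv.2⟩
  have hD : Dfin x σ hne n (j+1) = T1 ∪ B2 := by
    ext v
    simp only [Finset.mem_union, hT1, hB2, Finset.mem_filter, Finset.mem_biUnion,
      Finset.mem_image, hT2, hT, mem_Dfin, mem_fextL]
    constructor
    · rintro ⟨hf, hwl, hlen, hd⟩
      by_cases hc : wl σ v.tail < n
      · exact Or.inl ⟨⟨hf, hwl, by omega, Or.inl hc⟩, by omega⟩
      · have hvlen : v.length = j + 1 := by tauto
        have hvne : v ≠ [] := by intro h; rw [h] at hvlen; simp at hvlen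
        refine Or.inr ⟨v.tail, ⟨⟨isFactor_tail hf, by omega, ?_, Or.inr ?_⟩, ?_⟩,
          v.head hvne, ?_, ?_⟩
        · simp; omega
        · simp; omega
        · simp; omega
        · rw [List.cons_head_tail]; exact hf
        · rw [List.cons_head_tail]
    · rintro (⟨⟨hf, hwl, hlen, hd⟩, hne'⟩ | ⟨v', ⟨⟨hf', hwl', hlen', hd'⟩, hlen2⟩, a, ha, rfl⟩)
      · refine ⟨hf, hwl, by omega, ?_⟩
        left
        tauto
      · refine ⟨ha, by simp; omega, by simp; omega, Or.inr (by simp; omega)⟩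
  have hdisj : Disjoint T1 B2 := by
    rw [Finset.disjoint_left]
    rintro v hv1 hv2
    rw [hT1, Finset.mem_filter, hT, mem_Dfin] at hv1
    have hc1 : wl σ v.tail < n := by
      rcases hv1.1.2.2.2 with h | h
      · exact h
      · exact absurd h hv1.2
    rw [hB2, Finset.mem_biUnion] at hv2
    obtain ⟨v', hv', hmem⟩ := hv2
    rw [Finset.mem_image] at hmem
    obtain ⟨a, -, rfl⟩ := hmem
    have := (hmemT2 v' hv').2.1
    simp at hc1
    omega
  have hpd : (T2 : Set (List A)).PairwiseDisjoint
      (fun v => (fextL x v).image (fun a => a :: v)) := by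
    intro v hv v' hv' hvv'
    apply Finset.disjoint_left.mpr
    rintro u hu hu'
    rw [Finset.mem_image] at hu hu'
    obtain ⟨a, -, rfl⟩ := hu
    obtain ⟨a', -, h⟩ := hu'
    injection h.symm with h1 h2
    exact hvv' h2
  have hinner : ∀ v ∈ T2,
      ∑ u ∈ (fextL x v).image (fun a => a :: v), (((fextR x u).card : ℤ) - 1)
        = mult x v + (((fextR x v).card : ℤ) - 1) := by
    intro v hv
    rw [Finset.sum_image (by intro a _ a' _ h; injection h)]
    have : ∑ a ∈ fextL x v, (((fextR x (a :: v)).card : ℤ) - 1)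
        = ((fextB x v).card : ℤ) - (fextL x v).card := by
      rw [Finset.sum_sub_distrib, fextB_card]
      simp
    rw [this, mult'_eq]
    ring
  rw [hD, Hsum, Finset.sum_union hdisj, Finset.sum_biUnion hpd,
    Finset.sum_congr rfl hinner, Finset.sum_add_distrib]
  have hsplit : Hsum x T = ∑ v ∈ T1, (((fextR x v).card : ℤ) - 1)
      + ∑ v ∈ T2, (((fextR x v).card : ℤ) - 1) := by
    rw [Hsum, hT1, hT2, ← Finset.sum_filter_add_sum_filter_not T (fun v => v.length = j)]
    ring
  rw [hsplit]
  ring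

noncomputable def Lfin (x : ℤ → A) (m : ℕ) : Finset (List A) :=
  ((List.finite_length_eq A m).subset (fun v (hv : v ∈ {v : List A | IsFactor x v ∧ v.length = m}) => hv.2)).toFinset

@[simp] lemma mem_Lfin {x : ℤ → A} {m : ℕ} {v : List A} :
    v ∈ Lfin x m ↔ IsFactor x v ∧ v.length = m := by simp [Lfin]

lemma Dfin_top (x : ℤ → A) (σ : A → List B) (hne : ∀ a, σ a ≠ []) {n L : ℕ} (h : n ≤ L) :
    Dfin x σ hne n L = Lfin x L := by
  ext v
  rw [mem_Dfin, mem_Lfin]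
  constructor
  · rintro ⟨hf, hwl, hlen, hd⟩
    refine ⟨hf, ?_⟩
    rcases hd with hd | hd
    · by_contra hc
      have h1 : v.tail.length ≤ wl σ v.tail := length_le_wl σ hne v.tail
      have h2 : v.tail.length = v.length - 1 := by simp
      omega
    · exact hd
  · rintro ⟨hf, rfl⟩
    have := length_le_wl σ hne v
    exact ⟨hf, by omega, le_rfl, Or.inr rfl⟩

lemma cplx_eq (x : ℤ → A) (m : ℕ) :
    Set.ncard {w : List A | IsFactor x w ∧ w.length = m} = (Lfin x m).card := by
  rw [Set.ncard_eq_toFinset_card _ ((List.finite_length_eq A m).subset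
    (fun v (hv : v ∈ {v : List A | IsFactor x v ∧ v.length = m}) => hv.2))]
  rfl

lemma Lfin_card_succ (x : ℤ → A) (m : ℕ) :
    (Lfin x (m+1)).card = ∑ v ∈ Lfin x m, (fextR x v).card := by
  classical
  rw [Finset.card_eq_sum_card_fiberwise (f := fun u => u.dropLast) (t := Lfin x m) ?_]
  · refine Finset.sum_congr rfl ?_
    intro v hv
    rw [mem_Lfin] at hv
    rw [show (Lfin x (m+1)).filter (fun u => u.dropLast = v)
        = (fextR x v).image (fun b => v ++ [b]) by
      ext u
      simp only [Finset.mem_filter, mem_Lfin, Finset.mem_image, mem_fextR]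
      constructor
      · rintro ⟨⟨hf, hlen⟩, hdl⟩
        have hu : u ≠ [] := by intro h; rw [h] at hlen; simp at hlen
        refine ⟨u.getLast hu, ?_, ?_⟩
        · rw [← hdl, List.dropLast_append_getLast hu]; exact hf
        · rw [← hdl, List.dropLast_append_getLast hu]
      · rintro ⟨b, hb, rfl⟩
        refine ⟨⟨hb, by simp [hv.2]⟩, by simp⟩]
    rw [Finset.card_image_of_injective _ (fun b b' h => by simpa using h)]
  · intro u hu
    rw [Finset.mem_coe, mem_Lfin] at hu
    rw [Finset.mem_coe, mem_Lfin]
    exact ⟨isFactor_dropLast hu.1, by simp [hu.2]⟩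

lemma Lfin_card_succ' (x : ℤ → A) (m : ℕ) :
    ((Lfin x (m+1)).card : ℤ) = (Lfin x m).card + Hsum x (Lfin x m) := by
  rw [Lfin_card_succ, Hsum, Finset.sum_sub_distrib]
  push_cast
  simp


/-- Length of the image of the head letter. -/
def hl (σ : A → List B) (w : List A) : ℕ := w.head?.elim 0 fun a => (σ a).length

lemma hl_cons (σ : A → List B) (a : A) (w : List A) : hl σ (a :: w) = (σ a).length := rfl

lemma hl_eq (σ : A → List B) {w : List A} (h : w ≠ []) :
    hl σ w = (σ (w.head h)).length := by
  cases w with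
  | nil => exact absurd rfl h
  | cons a w => rfl

lemma hl_concat (σ : A → List B) {v : List A} (b : A) (h : v ≠ []) :
    hl σ (v ++ [b]) = hl σ v := by
  cases v with
  | nil => exact absurd rfl h
  | cons a v => rfl

lemma wl_eq_hl_add (σ : A → List B) {w : List A} (h : w ≠ []) :
    wl σ w = hl σ w + wl σ w.tail := by
  cases w with
  | nil => exact absurd rfl h
  | cons a w => simp [hl_cons]

lemma wid_le (σ : A → List B) (a : A) : (σ a).length ≤ width σ :=
  Finset.le_sup (f := fun a => (σ a).length) (Finset.mem_univ a)

/-- The set of coverings, in explicit form. -/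
def Cset (x : ℤ → A) (σ : A → List B) (n : ℕ) : Set (List A × ℕ) :=
  {p | IsFactor x p.1 ∧ p.1 ≠ [] ∧ p.2 + 1 ≤ hl σ p.1 ∧
    wl σ p.1.dropLast < p.2 + n ∧ p.2 + n ≤ wl σ p.1}

lemma Cset_finite (x : ℤ → A) (σ : A → List B) (hne : ∀ a, σ a ≠ []) (n : ℕ) :
    (Cset x σ n).Finite := by
  apply Set.Finite.subset (Set.Finite.prod (List.finite_length_le A (n + 2 * width σ))
    (Set.finite_Iio (width σ)))
  rintro ⟨w, k⟩ ⟨-, hwne, hk, hdl, hwl⟩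
  dsimp only at hwne hk hdl hwl
  have h1 : hl σ w ≤ width σ := by rw [hl_eq σ hwne]; exact wid_le σ _
  have h2 : wl σ w = wl σ w.dropLast + (σ (w.getLast hwne)).length := wl_dropLast σ hwne
  have h3 : (σ (w.getLast hwne)).length ≤ width σ := wid_le σ _
  have h4 : w.length ≤ wl σ w := length_le_wl σ hne w
  constructor
  · simp only [Set.mem_setOf_eq]
    omega
  · simp only [Set.mem_Iio]
    omega

noncomputable def Cfin (x : ℤ → A) (σ : A → List B) (hne : ∀ a, σ a ≠ []) (n : ℕ) :
    Finset (List A × ℕ) := (Cset_finite x σ hne n).toFinset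

lemma mem_Cfin {x : ℤ → A} {σ : A → List B} {hne : ∀ a, σ a ≠ []} {n : ℕ} {p : List A × ℕ} :
    p ∈ Cfin x σ hne n ↔ IsFactor x p.1 ∧ p.1 ≠ [] ∧ p.2 + 1 ≤ hl σ p.1 ∧
      wl σ p.1.dropLast < p.2 + n ∧ p.2 + n ≤ wl σ p.1 := by
  simp [Cfin, Cset]

lemma ccount_eq (x : ℤ → A) (σ : A → List B) (hne : ∀ a, σ a ≠ []) {n : ℕ} (hn : 1 ≤ n) :
    ccount σ x n = (Cfin x σ hne n).card := by
  have hset : {p : List A × ℕ |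
      IsFactor x p.1 ∧ ∃ u : List B, u.length = n ∧ IsCovering σ u p.1 p.2} = Cset x σ n := by
    ext ⟨w, k⟩
    simp only [Set.mem_setOf_eq, Cset]
    constructor
    · rintro ⟨hf, u, hu, hwne, hune, huval, hhd, hlast⟩
      have hlen : u.length = min u.length ((appw σ w).length - k) := by
        conv_lhs => rw [huval]
        simp
      rw [hu] at hlen hlast
      refine ⟨hf, hwne, hhd, hlast, ?_⟩
      have : (appw σ w).length = wl σ w := rfl
      omega
    · rintro ⟨hf, hwne, hhd, hdl, hwl⟩
      refine ⟨hf, ((appw σ w).drop k).take n, ?_, hwne, ?_, ?_, ?_, ?_⟩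
      · have : (appw σ w).length = wl σ w := rfl
        simp
        omega
      · have : (((appw σ w).drop k).take n).length = n := by
          have : (appw σ w).length = wl σ w := rfl
          simp
          omega
        intro hcon
        rw [hcon] at this
        simp at this
        omega
      · congr 1
        have : (appw σ w).length = wl σ w := rfl
        simp
        omega
      · exact hhd
      · have h2 : (((appw σ w).drop k).take n).length = n := by
          have : (appw σ w).length = wl σ w := rfl
          simp
          omega
        rw [h2]
        exact hdl
  rw [ccount, hset, Set.ncard_eq_toFinset_card _ (Cset_finite x σ hne n)]
  rfl

lemma mem_D0 {x : ℤ → A} {σ : A → List B} {hne : ∀ a, σ a ≠ []} {n : ℕ} (hn : 1 ≤ n)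
    {v : List A} :
    v ∈ Dfin x σ hne n 0 ↔ IsFactor x v ∧ n ≤ wl σ v ∧ wl σ v.tail < n := by
  rw [mem_Dfin]
  constructor
  · rintro ⟨hf, hwl, -, hd | hd⟩
    · exact ⟨hf, hwl, hd⟩
    · rw [List.length_eq_zero_iff] at hd
      rw [hd] at hwl
      simp at hwl
      omega
  · rintro ⟨hf, hwl, hd⟩
    exact ⟨hf, hwl, by omega, Or.inl hd⟩

lemma D0_ne_nil {x : ℤ → A} {σ : A → List B} {hne : ∀ a, σ a ≠ []} {n : ℕ} (hn : 1 ≤ n)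
    {v : List A} (hv : v ∈ Dfin x σ hne n 0) : v ≠ [] := by
  rw [mem_D0 hn] at hv
  intro h
  rw [h] at hv
  simp at hv
  omega

lemma hl_large {σ : A → List B} {n : ℕ} {v : List A} (hvne : v ≠ [])
    (h1 : n ≤ wl σ v) (h2 : wl σ v.tail < n) : wl σ v - n + 1 ≤ hl σ v := by
  have := wl_eq_hl_add σ hvne
  omega

lemma ccount_rec (x : ℤ → A) (σ : A → List B) (hne : ∀ a, σ a ≠ []) {n : ℕ} (hn : 1 ≤ n) :
    ((Cfin x σ hne (n+1)).card : ℤ)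
      = (Cfin x σ hne n).card + Hsum x (Dfin x σ hne n 0) := by
  classical
  set Stay := (Cfin x σ hne n).filter (fun p => p.2 + n < wl σ p.1) with hStay
  set Leave := (Cfin x σ hne n).filter (fun p => ¬ p.2 + n < wl σ p.1) with hLeave
  set New := (Cfin x σ hne (n+1)).filter (fun p => wl σ p.1.dropLast = p.2 + n) with hNew
  set Stay' := (Cfin x σ hne (n+1)).filter (fun p => ¬ wl σ p.1.dropLast = p.2 + n) with hStay'
  have hsplit1 : (Cfin x σ hne (n+1)).card = New.card + Stay'.card :=
    (Finset.card_filter_add_card_filter_not _).symm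
  have hsplit2 : (Cfin x σ hne n).card = Stay.card + Leave.card :=
    (Finset.card_filter_add_card_filter_not _).symm
  have hSS : Stay' = Stay := by
    ext ⟨w, k⟩
    rw [hStay', hStay, Finset.mem_filter, Finset.mem_filter, mem_Cfin, mem_Cfin]
    dsimp only
    constructor
    · rintro ⟨⟨hf, hwne, hhd, hdl, hwl⟩, hne'⟩
      exact ⟨⟨hf, hwne, hhd, by omega, by omega⟩, by omega⟩
    · rintro ⟨⟨hf, hwne, hhd, hdl, hwl⟩, hlt⟩
      exact ⟨⟨hf, hwne, hhd, by omega, by omega⟩, by omega⟩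
  have hLeaveCard : Leave.card = (Dfin x σ hne n 0).card := by
    apply Finset.card_nbij' (i := fun p => p.1) (j := fun v => (v, wl σ v - n))
    · rintro ⟨w, k⟩ hp
      rw [hLeave, Finset.mem_coe, Finset.mem_filter, mem_Cfin] at hp
      obtain ⟨⟨hf, hwne, hhd, hdl, hwl⟩, hlt⟩ := hp
      replace hf : IsFactor x w := hf
      replace hwne : w ≠ [] := hwne
      replace hhd : k + 1 ≤ hl σ w := hhd
      replace hwl : k + n ≤ wl σ w := hwl
      replace hlt : ¬ k + n < wl σ w := hlt
      show w ∈ Dfin x σ hne n 0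
      rw [mem_D0 hn]
      have h2 : wl σ w = hl σ w + wl σ w.tail := wl_eq_hl_add σ hwne
      exact ⟨hf, by omega, by omega⟩
    · intro v hv
      rw [Finset.mem_coe, mem_D0 hn] at hv
      obtain ⟨hf, hwl, htl⟩ := hv
      have hvne : v ≠ [] := by
        intro h; rw [h] at hwl; simp at hwl; omega
      rw [hLeave, Finset.mem_coe, Finset.mem_filter, mem_Cfin]
      have h2 : wl σ v = hl σ v + wl σ v.tail := wl_eq_hl_add σ hvne
      have h3 : wl σ v = wl σ v.dropLast + (σ (v.getLast hvne)).length := wl_dropLast σ hvne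
      have h4 := List.length_pos_iff.mpr (hne (v.getLast hvne))
      refine ⟨⟨hf, hvne, ?_, ?_, ?_⟩, ?_⟩
      · show (wl σ v - n) + 1 ≤ hl σ v
        omega
      · show wl σ v.dropLast < (wl σ v - n) + n
        omega
      · show (wl σ v - n) + n ≤ wl σ v
        omega
      · show ¬ (wl σ v - n) + n < wl σ v
        omega
    · rintro ⟨w, k⟩ hp
      rw [hLeave, Finset.mem_coe, Finset.mem_filter, mem_Cfin] at hp
      obtain ⟨⟨hf, hwne, hhd, hdl, hwl⟩, hlt⟩ := hp
      replace hwl : k + n ≤ wl σ w := hwl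
      replace hlt : ¬ k + n < wl σ w := hlt
      show (w, wl σ w - n) = (w, k)
      have : wl σ w - n = k := by omega
      rw [this]
    · intro v hv
      rfl
  have hNewCard : New.card = ∑ v ∈ Dfin x σ hne n 0, (fextR x v).card := by
    rw [Finset.card_eq_sum_card_fiberwise (f := fun p => p.1.dropLast) (t := Dfin x σ hne n 0) ?_]
    · refine Finset.sum_congr rfl ?_
      intro v hv
      have hv' := (mem_D0 hn).mp hv
      obtain ⟨hf, hwl, htl⟩ := hv'
      have hvne : v ≠ [] := D0_ne_nil hn hv
      rw [show New.filter (fun p => p.1.dropLast = v)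
          = (fextR x v).image (fun b => (v ++ [b], wl σ v - n)) from ?_]
      · rw [Finset.card_image_of_injective]
        rintro b b' hb
        simp only [Prod.mk.injEq] at hb
        simpa using hb.1
      · ext ⟨w, k⟩
        rw [Finset.mem_filter, hNew, Finset.mem_filter, mem_Cfin, Finset.mem_image]
        constructor
        · rintro ⟨⟨⟨hf', hwne, hhd, hdl, hwl'⟩, heq⟩, hdrop⟩
          dsimp only at hhd hdl hwl' heq hdrop
          refine ⟨w.getLast hwne, ?_, ?_⟩
          · rw [mem_fextR, ← hdrop, List.dropLast_append_getLast hwne]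
            exact hf'
          · rw [Prod.mk.injEq]
            constructor
            · rw [← hdrop, List.dropLast_append_getLast hwne]
            · rw [hdrop] at heq
              omega
        · rintro ⟨b, hb, hbeq⟩
          rw [mem_fextR] at hb
          rw [Prod.mk.injEq] at hbeq
          obtain ⟨hw, hk⟩ := hbeq
          subst hw
          subst hk
          have hk1 : (wl σ v - n) + n = wl σ v := by omega
          have h5 := List.length_pos_iff.mpr (hne b)
          have h6 : hl σ (v ++ [b]) = hl σ v := hl_concat σ b hvne
          have h7 := wl_eq_hl_add σ hvne
          refine ⟨⟨⟨hb, by simp, ?_, ?_, ?_⟩, ?_⟩, by simp⟩ <;> dsimp only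
          · rw [h6]; omega
          · rw [List.dropLast_concat]
            omega
          · rw [wl_append]
            simp only [wl_cons, wl_nil]
            omega
          · rw [List.dropLast_concat]
            omega
    · rintro ⟨w, k⟩ hp
      rw [hNew, Finset.mem_coe, Finset.mem_filter, mem_Cfin] at hp
      obtain ⟨⟨hf, hwne, hhd, hdl, hwl⟩, heq⟩ := hp
      dsimp only at hhd hdl hwl heq ⊢
      rw [Finset.mem_coe, mem_D0 hn]
      have hvne : w.dropLast ≠ [] := by
        intro h
        rw [h] at heq
        simp at heq
        omega
      refine ⟨isFactor_dropLast hf, by omega, ?_⟩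
      -- need : wl σ w.dropLast.tail < n
      have hw2 : w = w.dropLast ++ [w.getLast hwne] := (List.dropLast_append_getLast hwne).symm
      have h6 : hl σ w = hl σ w.dropLast := by
        conv_lhs => rw [hw2]
        exact hl_concat σ _ hvne
      have h7 := wl_eq_hl_add σ hvne
      omega
  have hHsum : Hsum x (Dfin x σ hne n 0)
      = (∑ v ∈ Dfin x σ hne n 0, ((fextR x v).card : ℤ)) - (Dfin x σ hne n 0).card := by
    rw [Hsum, Finset.sum_sub_distrib]
    simp
  rw [hsplit1, hSS, hsplit2, hLeaveCard, hNewCard, hHsum]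
  push_cast
  ring

lemma isFactor_singleton {x : ℤ → A} (hx : Function.Surjective x) (a : A) :
    IsFactor x [a] := by
  obtain ⟨i, rfl⟩ := hx a
  exact ⟨i, fun j => by fin_cases j; simp⟩

lemma Cfin_one (x : ℤ → A) (hx : Function.Surjective x) (σ : A → List B)
    (hne : ∀ a, σ a ≠ []) :
    (Cfin x σ hne 1).card = ∑ a : A, (σ a).length := by
  classical
  have hmem : ∀ p : List A × ℕ, p ∈ Cfin x σ hne 1 ↔ ∃ a, p.1 = [a] ∧ p.2 < (σ a).length := by
    rintro ⟨w, k⟩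
    rw [mem_Cfin]
    constructor
    · rintro ⟨hf, hwne, hhd, hdl, hwl⟩
      replace hhd : k + 1 ≤ hl σ w := hhd
      replace hdl : wl σ w.dropLast < k + 1 := hdl
      cases w with
      | nil => exact absurd rfl hwne
      | cons a t =>
        cases t with
        | nil =>
          refine ⟨a, rfl, ?_⟩
          rw [hl_cons] at hhd
          omega
        | cons b t =>
          exfalso
          have h1 : (a :: b :: t).dropLast = a :: (b :: t).dropLast := rfl
          rw [h1] at hdl
          rw [wl_cons] at hdl
          rw [hl_cons] at hhd
          omega
    · rintro ⟨a, rfl, hk⟩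
      refine ⟨isFactor_singleton hx a, by simp, ?_, ?_, ?_⟩
      · rw [hl_cons]; omega
      · show wl σ [] < k + 1
        simp
      · show k + 1 ≤ wl σ [a]
        simp only [wl_cons, wl_nil]
        omega
  have : Cfin x σ hne 1
      = Finset.univ.biUnion (fun a : A => (Finset.range (σ a).length).image (fun k => ([a], k))) := by
    ext p
    rw [hmem]
    simp only [Finset.mem_biUnion, Finset.mem_univ, Finset.mem_image, Finset.mem_range,
      true_and]
    constructor
    · rintro ⟨a, h1, h2⟩
      exact ⟨a, p.2, h2, by rw [← h1]⟩
    · rintro ⟨a, k, hk, rfl⟩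
      exact ⟨a, rfl, hk⟩
  rw [this, Finset.card_biUnion]
  · refine Finset.sum_congr rfl ?_
    intro a _
    rw [Finset.card_image_of_injective _ (fun k k' h => by simpa using h), Finset.card_range]
  · intro a _ a' _ haa'
    simp only [Function.onFun]
    rw [Finset.disjoint_left]
    rintro p hp hp'
    rw [Finset.mem_image] at hp hp'
    obtain ⟨k, -, rfl⟩ := hp
    obtain ⟨k', -, h⟩ := hp'
    rw [Prod.mk.injEq] at h
    have h3 : a = a' := by
      have := h.1.symm
      simpa using this
    exact haa' h3

lemma Hsum_D_const (x : ℤ → A) (σ : A → List B) (hne : ∀ a, σ a ≠ []) (hK : 1 ≤ width σ)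
    {N n : ℕ} (hN : ∀ w, IsFactor x w → N ≤ w.length → mult x w = 0)
    (hn : N * width σ ≤ n) (j : ℕ) :
    Hsum x (Dfin x σ hne n j) = Hsum x (Dfin x σ hne n 0) := by
  induction j with
  | zero => rfl
  | succ j ih =>
    rw [Hsum_step, ih, add_eq_left]
    apply Finset.sum_eq_zero
    intro v hv
    rw [Finset.mem_filter, mem_Dfin] at hv
    obtain ⟨⟨hf, hwl, -, -⟩, hlen⟩ := hv
    apply hN v hf
    have h1 : wl σ v ≤ v.length * width σ := wl_le σ (width σ) (fun a => wid_le σ a) v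
    have h2 : N * width σ ≤ v.length * width σ := by omega
    rcases Nat.lt_or_ge v.length N with h | h
    · exfalso
      have hmono : (v.length + 1) * width σ ≤ N * width σ :=
        Nat.mul_le_mul_right _ (Nat.succ_le_of_lt h)
      have hexp : (v.length + 1) * width σ = v.length * width σ + width σ := by ring
      omega
    · exact h

lemma Hsum_D0_eq_Lfin (x : ℤ → A) (σ : A → List B) (hne : ∀ a, σ a ≠ []) (hK : 1 ≤ width σ)
    {N n : ℕ} (hN : ∀ w, IsFactor x w → N ≤ w.length → mult x w = 0)
    (hn : N * width σ ≤ n) :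
    Hsum x (Dfin x σ hne n 0) = Hsum x (Lfin x n) := by
  rw [← Hsum_D_const x σ hne hK hN hn n, Dfin_top x σ hne le_rfl]

lemma Lfin_zero (x : ℤ → A) : Lfin x 0 = {([] : List A)} := by
  ext v
  rw [mem_Lfin, Finset.mem_singleton]
  constructor
  · rintro ⟨-, h⟩
    exact List.length_eq_zero_iff.mp h
  · rintro rfl
    exact ⟨isFactor_nil x, rfl⟩

lemma Hsum_Lfin_zero (x : ℤ → A) (hx : Function.Surjective x) :
    Hsum x (Lfin x 0) = (Fintype.card A : ℤ) - 1 := by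
  rw [Lfin_zero, Hsum, Finset.sum_singleton]
  congr 2
  rw [show fextR x [] = Finset.univ from ?_, Finset.card_univ]
  ext b
  simp only [mem_fextR, Finset.mem_univ, iff_true, List.nil_append]
  exact isFactor_singleton hx b

lemma Hsum_Lfin_succ (x : ℤ → A) (σ : A → List B) (hne : ∀ a, σ a ≠ [])
    (hmult : ∀ w, IsFactor x w → mult x w = 0) (m : ℕ) :
    Hsum x (Lfin x (m+1)) = Hsum x (Lfin x m) := by
  have h := Hsum_step x σ hne m m
  rw [Dfin_top x σ hne (le_refl m), Dfin_top x σ hne (Nat.le_succ m)] at h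
  rw [h, add_eq_left]
  apply Finset.sum_eq_zero
  intro v hv
  rw [Finset.mem_filter, mem_Lfin] at hv
  exact hmult v hv.1.1

end StmtAux

open StmtAux in
theorem stmt5 [Fintype A] [Fintype B] (hA : 2 ≤ Fintype.card A) (hB : 2 ≤ Fintype.card B)
    (x : ℤ → A) (hx : Function.Surjective x)
    (σ : A → List B) (hne : ∀ a, σ a ≠ []) (hcov : ∀ b, ∃ a, b ∈ σ a) :
    (∀ N : ℕ, EvThreshold x (fun w => mult x w = 0) N →
      ∃ C : ℤ, ∀ n : ℕ, max 1 (N * width σ) ≤ n →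
        (ccount σ x n : ℤ) = C + cplx x n) ∧
    ((∀ w, IsFactor x w → mult x w = 0) →
      ∀ n : ℕ, 1 ≤ n →
        ccount σ x n = (∑ a : A, (σ a).length) + (Fintype.card A - 1) * (n - 1)) := by
  have hAne : Nonempty A := Fintype.card_pos_iff.mp (by omega)
  obtain ⟨a₀⟩ := hAne
  have hK : 1 ≤ width σ := le_trans (List.length_pos_iff.mpr (hne a₀)) (wid_le σ a₀)
  have hcplx : ∀ m : ℕ, cplx x m = (Lfin x m).card := fun m => cplx_eq x m
  have hccount : ∀ m : ℕ, 1 ≤ m → ccount σ x m = (Cfin x σ hne m).card :=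
    fun m hm => ccount_eq x σ hne hm
  have hcrec : ∀ m : ℕ, 1 ≤ m →
      (ccount σ x (m+1) : ℤ) = ccount σ x m + Hsum x (Dfin x σ hne m 0) := by
    intro m hm
    rw [hccount m hm, hccount (m+1) (by omega)]
    exact ccount_rec x σ hne hm
  have hprec : ∀ m : ℕ, (cplx x (m+1) : ℤ) = cplx x m + Hsum x (Lfin x m) := by
    intro m
    rw [hcplx m, hcplx (m+1)]
    exact Lfin_card_succ' x m
  constructor
  · intro N hEv
    have hN := hEv.1
    refine ⟨(ccount σ x (max 1 (N * width σ)) : ℤ) - cplx x (max 1 (N * width σ)), ?_⟩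
    intro n hn
    induction n, hn using Nat.le_induction with
    | base => ring
    | succ n hn ih =>
      have h1 : 1 ≤ n := le_trans (le_max_left _ _) hn
      have h2 : N * width σ ≤ n := le_trans (le_max_right _ _) hn
      have e1 := hcrec n h1
      have e2 := hprec n
      have e3 : Hsum x (Dfin x σ hne n 0) = Hsum x (Lfin x n) :=
        Hsum_D0_eq_Lfin x σ hne hK hN h2
      rw [e1, e2, e3, ih]
      ring
  · intro hmult n hn
    have hLconst : ∀ m : ℕ, Hsum x (Lfin x m) = (Fintype.card A : ℤ) - 1 := by
      intro m
      induction m with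
      | zero => exact Hsum_Lfin_zero x hx
      | succ m ih => rw [Hsum_Lfin_succ x σ hne hmult m, ih]
    have hstep : ∀ m : ℕ, 1 ≤ m → ccount σ x (m+1) = ccount σ x m + (Fintype.card A - 1) := by
      intro m hm
      have e1 := hcrec m hm
      have e3 : Hsum x (Dfin x σ hne m 0) = Hsum x (Lfin x m) :=
        Hsum_D0_eq_Lfin x σ hne hK (N := 0) (fun w hw _ => hmult w hw) (by omega)
      rw [e3, hLconst m] at e1
      have : (ccount σ x (m+1) : ℤ) = ((ccount σ x m + (Fintype.card A - 1) : ℕ) : ℤ) := by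
        rw [e1]
        push_cast [Nat.cast_sub (by omega : 1 ≤ Fintype.card A)]
        ring
      exact_mod_cast this
    have hbase : ccount σ x 1 = ∑ a : A, (σ a).length := by
      rw [hccount 1 (le_refl 1)]
      exact Cfin_one x hx σ hne
    induction n, hn using Nat.le_induction with
    | base => simp [hbase]
    | succ n hn ih =>
      rw [hstep n hn, ih]
      have hn1 : n - 1 + 1 = n := by omega
      have : (Fintype.card A - 1) * (n - 1) + (Fintype.card A - 1)
          = (Fintype.card A - 1) * (n + 1 - 1) := by
        rw [show n + 1 - 1 = (n - 1) + 1 by omega]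
        ring
      omega
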